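/- Let C be a unital algebra over ℂ, let N and L be positive integers, let u₁,…,u_N ∈ C be invertible elements, and let (ρ_{i,j})_{1≤i<j≤N} be complex numbers of absolute value 1 such that u_i u_j = ρ_{i,j} u_j u_i for all 1 ≤ i < j ≤ N. Let φ : C → ℂ be a linear functional such that φ(u₁^{λ₁}⋯u_N^{λ_N}) = 0 for every nonzero (λ₁,…,λ_N) ∈ ℤ^N with |λ_j| < L for all j. Let n < L be a positive integer, i₁,…,i_n ∈ {1,…,N} and ε(1),…,ε(n) ∈ {1,−1}. If there exists j ∈ {1,…,N} such that Σ_{m : i_m = j} ε(m) ≠ 0, then φ(u_{i₁}^{ε(1)}⋯u_{i_n}^{ε(n)}) = 0. -/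

import Mathlib

/-!
Modulo the central subgroup of invertible scalars the `u_j` commute, so the word
`u_{i₁}^{ε(1)} ⋯ u_{i_n}^{ε(n)}` is a scalar multiple of the ordered monomial
`u₁^{λ₁} ⋯ u_N^{λ_N}` with `λ_j = Σ_{m : i_m = j} ε(m)`. This exponent vector is nonzero by
hypothesis and `|λ_j| ≤ n < L`, so `φ` kills the monomial, hence the word.
-/

open Finset

theorem Finset.prod_zpow_eq_zpow_sum {G ι : Type*} [CommGroup G] (s : Finset ι) (f : ι → ℤ)
    (a : G) : ∏ i ∈ s, a ^ f i = a ^ ∑ i ∈ s, f i := by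
  induction s using Finset.cons_induction with
  | empty => simp
  | cons b s hb ih => simp [prod_cons, sum_cons, zpow_add, ih]

theorem Int.natAbs_sum_le_card {ι : Type*} (s : Finset ι) (f : ι → ℤ)
    (hf : ∀ m ∈ s, (f m).natAbs ≤ 1) : (∑ m ∈ s, f m).natAbs ≤ #s :=
  (Int.natAbs_sum_le s f).trans (by simpa using Finset.sum_le_card_nsmul s _ 1 hf)

theorem Units.val_prod_ofFn {M : Type*} [Monoid M] {n : ℕ} (f : Fin n → Mˣ) :
    ((List.ofFn f).prod : M) = (List.ofFn fun m => (f m : M)).prod := by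
  rw [← Units.coeHom_apply, map_list_prod, List.map_ofFn]
  rfl

section Words

variable {G : Type*} {N n : ℕ}

theorem prod_ofFn_zpow_comp_eq_prod_ofFn_zpow_sum_fiber [CommGroup G]
    (f : Fin N → G) (i : Fin n → Fin N) (ε : Fin n → ℤ) :
    (List.ofFn fun m => f (i m) ^ ε m).prod =
      (List.ofFn fun j => f j ^ ∑ m ∈ univ.filter (fun m => i m = j), ε m).prod := by
  rw [List.prod_ofFn, List.prod_ofFn, ← prod_fiberwise univ i]
  refine prod_congr rfl fun j _ => ?_
  rw [← Finset.prod_zpow_eq_zpow_sum]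
  exact prod_congr rfl fun m hm => by rw [(Finset.mem_filter.1 hm).2]

open IsMulCommutative in
theorem prod_ofFn_zpow_comp_eq_prod_ofFn_zpow_sum_fiber_of_commute [Group G]
    (f : Fin N → G) (hf : ∀ a b, Commute (f a) (f b))
    (i : Fin n → Fin N) (ε : Fin n → ℤ) :
    (List.ofFn fun m => f (i m) ^ ε m).prod =
      (List.ofFn fun j => f j ^ ∑ m ∈ univ.filter (fun m => i m = j), ε m).prod := by
  let H := Subgroup.closure (Set.range f)
  have : IsMulCommutative H := Subgroup.isMulCommutative_closure (by
    rintro _ ⟨a, rfl⟩ _ ⟨b, rfl⟩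
    exact hf a b)
  let g : Fin N → H := fun j => ⟨f j, Subgroup.subset_closure (Set.mem_range_self j)⟩
  simpa [map_list_prod, List.map_ofFn, Function.comp_def, g] using
    congrArg H.subtype (prod_ofFn_zpow_comp_eq_prod_ofFn_zpow_sum_fiber g i ε)

end Words

section ScalarUnits

variable (R C : Type*) [CommSemiring R] [Semiring C] [Algebra R C]

def scalarUnits : Subgroup Cˣ :=
  (Units.map (algebraMap R C : R →* C)).range

instance : (scalarUnits R C).Normal where
  conj_mem := by
    rintro _ ⟨c, rfl⟩ g
    refine ⟨c, Units.ext ?_⟩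
    simp only [Units.coe_map, MonoidHom.coe_coe, Units.val_mul]
    rw [← Algebra.commutes, Units.mul_inv_cancel_right]

variable {R C}

theorem scalarUnits.commute_mk_of_mul_eq_smul {x y : Cˣ} {c : R} (hc : IsUnit c)
    (h : (x : C) * y = c • ((y : C) * x)) :
    Commute (x : Cˣ ⧸ scalarUnits R C) y := by
  obtain ⟨c, rfl⟩ := hc
  have hxy : x * y = Units.map (algebraMap R C : R →* C) c * (y * x) :=
    Units.ext (by simpa [Algebra.smul_def] using h)
  show ((x * y : Cˣ) : Cˣ ⧸ scalarUnits R C) = ((y * x : Cˣ) : Cˣ ⧸ scalarUnits R C)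
  rw [hxy, QuotientGroup.mk_mul, (QuotientGroup.eq_one_iff (N := scalarUnits R C) _).2 ⟨c, rfl⟩,
    one_mul]

theorem scalarUnits.map_eq_zero_of_mk_eq {M : Type*} [AddCommMonoid M] [Module R M]
    (φ : C →ₗ[R] M) {x y : Cˣ} (hxy : (x : Cˣ ⧸ scalarUnits R C) = y) (hy : φ y = 0) :
    φ x = 0 := by
  obtain ⟨c, hc⟩ := QuotientGroup.eq.1 hxy.symm
  have hx : x = y * Units.map (algebraMap R C : R →* C) c := by rw [hc, mul_inv_cancel_left]
  rw [hx, Units.val_mul, Units.coe_map, MonoidHom.coe_coe, ← Algebra.commutes,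
    ← Algebra.smul_def, map_smul, hy, smul_zero]

end ScalarUnits

open scoped Classical in
theorem word_vanishes_of_unbalanced_general
    (C : Type*) [Ring C] [Algebra ℂ C] (N L : ℕ)
    (u : Fin N → Cˣ) (ρ : Fin N → Fin N → ℂ)
    (hρ : ∀ i j : Fin N, i < j → ‖ρ i j‖ = 1)
    (hcomm : ∀ i j : Fin N, i < j →
      (u i : C) * (u j : C) = ρ i j • ((u j : C) * (u i : C)))
    (φ : C →ₗ[ℂ] ℂ)
    (hφ : ∀ lam : Fin N → ℤ, lam ≠ 0 → (∀ j, (lam j).natAbs < L) →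
      φ ((List.ofFn fun j => ((u j ^ lam j : Cˣ) : C)).prod) = 0)
    (n : ℕ) (hnL : n < L) (i : Fin n → Fin N) (ε : Fin n → ℤ)
    (hε : ∀ m, ε m = 1 ∨ ε m = -1)
    (hj : ∃ j : Fin N, ∑ m ∈ Finset.univ.filter (fun m => i m = j), ε m ≠ 0) :
    φ ((List.ofFn fun m => ((u (i m) ^ ε m : Cˣ) : C)).prod) = 0 := by
  let π := QuotientGroup.mk' (scalarUnits ℂ C)
  have hlt : ∀ a b, a < b → Commute (π (u a)) (π (u b)) := fun a b hab =>
    scalarUnits.commute_mk_of_mul_eq_smul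
      (Ne.isUnit (by simp [← norm_ne_zero_iff, hρ a b hab])) (hcomm a b hab)
  have hu : ∀ a b, Commute (π (u a)) (π (u b)) := by
    intro a b
    rcases lt_trichotomy a b with hab | rfl | hab
    exacts [hlt a b hab, .refl _, (hlt b a hab).symm]
  set lam : Fin N → ℤ := fun j => ∑ m ∈ Finset.univ.filter (fun m => i m = j), ε m
  have hword :
      π (List.ofFn fun m => u (i m) ^ ε m).prod = π (List.ofFn fun j => u j ^ lam j).prod := by
    simpa only [map_list_prod, List.map_ofFn, Function.comp_def, map_zpow] using
      prod_ofFn_zpow_comp_eq_prod_ofFn_zpow_sum_fiber_of_commute _ hu i ε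
  rw [← Units.val_prod_ofFn]
  refine scalarUnits.map_eq_zero_of_mk_eq φ hword ?_
  rw [Units.val_prod_ofFn]
  obtain ⟨j, hj⟩ := hj
  refine hφ lam (fun h => hj (congrFun h j)) fun j => ?_
  calc (lam j).natAbs ≤ #(Finset.univ.filter fun m => i m = j) :=
        Int.natAbs_sum_le_card _ _ fun m _ => by rcases hε m with h | h <;> simp [h]
    _ ≤ n := (card_filter_le _ _).trans (card_fin n).le
    _ < L := hnL

open scoped Classical in
/-- Let `u₁, …, u_N` be invertible elements of a unital `ℂ`-algebra with
`u_i u_j = ρ_{i,j} u_j u_i` for `i < j`, where `|ρ_{i,j}| = 1`, and let `φ` be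
a linear functional that kills all words `u₁^{λ₁} ⋯ u_N^{λ_N}` with
`(λ₁,…,λ_N) ≠ 0` and `|λ_j| < L`. If `n < L`, `ε(m) ∈ {1, -1}`, and for some
index `j` the total exponent `Σ_{m : i_m = j} ε(m)` is nonzero, then
`φ(u_{i₁}^{ε(1)} ⋯ u_{i_n}^{ε(n)}) = 0`. -/
theorem word_vanishes_of_unbalanced
    (C : Type*) [Ring C] [Algebra ℂ C] (N L : ℕ) (hN : 0 < N) (hL : 0 < L)
    (u : Fin N → Cˣ) (ρ : Fin N → Fin N → ℂ)
    (hρ : ∀ i j : Fin N, i < j → ‖ρ i j‖ = 1)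
    (hcomm : ∀ i j : Fin N, i < j →
      (u i : C) * (u j : C) = ρ i j • ((u j : C) * (u i : C)))
    (φ : C →ₗ[ℂ] ℂ)
    (hφ : ∀ lam : Fin N → ℤ, lam ≠ 0 → (∀ j, (lam j).natAbs < L) →
      φ ((List.ofFn fun j => ((u j ^ lam j : Cˣ) : C)).prod) = 0)
    (n : ℕ) (hn : 0 < n) (hnL : n < L) (i : Fin n → Fin N) (ε : Fin n → ℤ)
    (hε : ∀ m, ε m = 1 ∨ ε m = -1)
    (hj : ∃ j : Fin N, ∑ m ∈ Finset.univ.filter (fun m => i m = j), ε m ≠ 0) :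
    φ ((List.ofFn fun m => ((u (i m) ^ ε m : Cˣ) : C)).prod) = 0 :=
  word_vanishes_of_unbalanced_general C N L u ρ hρ hcomm φ hφ n hnL i ε hε hj
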